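/- The map u_α(z) = (z² + α)/(1 + α z²), for α ∈ (−1,1), maps the open upper half of the unit disc biholomorphically onto the open unit disc with a slit: namely, the image of the open upper half-disc is the open unit disc minus the real segment [α, 1). -/

import Mathlib

/-!
`u_α = m_α ∘ (z ↦ z²)`, where `m_α t = (t + α) / (1 + α t)` is an automorphism of the unit disc
with inverse `m_{-α}`. Squaring maps the upper half-disc bijectively onto the disc slit along
`[0, 1)`, the inverse being the branch `√t = i · exp (log (-t) / 2)` of the square root with values
in the upper half-plane. Since `m_α` preserves the real diameter and maps `[0, 1)` onto `[α, 1)`,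
it carries the disc slit along `[0, 1)` onto the disc slit along `[α, 1)`.
-/

open Complex Set
open scoped ComplexOrder

noncomputable def mobius (α : ℝ) (t : ℂ) : ℂ := (t + α) / (1 + α * t)

noncomputable def upperSqrt (t : ℂ) : ℂ := I * exp (log (-t) / 2)

def upperHalfDisc : Set ℂ := {z | ‖z‖ < 1 ∧ 0 < z.im}

def realSegment (a : ℝ) : Set ℂ := {w | w.im = 0 ∧ a ≤ w.re ∧ w.re < 1}

def slitDisc (a : ℝ) : Set ℂ := {w | ‖w‖ < 1} \ realSegment a

theorem one_add_mul_ne_zero_of_norm_le_of_norm_lt {a t : ℂ} (ha : ‖a‖ ≤ 1) (ht : ‖t‖ < 1) :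
    1 + a * t ≠ 0 := by
  intro h
  have hat : ‖a * t‖ = 1 := by rw [show a * t = -1 by linear_combination h, norm_neg, norm_one]
  rw [norm_mul] at hat
  nlinarith [norm_nonneg a, norm_nonneg t]

section Mobius

variable {α : ℝ} {t : ℂ}

theorem one_add_real_mul_ne_zero (hα : |α| < 1) (ht : ‖t‖ < 1) : 1 + α * t ≠ 0 :=
  one_add_mul_ne_zero_of_norm_le_of_norm_lt (by rw [norm_real, Real.norm_eq_abs]; exact hα.le) ht

theorem norm_mobius_lt_one (hα : |α| < 1) (ht : ‖t‖ < 1) : ‖mobius α t‖ < 1 := by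
  rw [mobius, norm_div, div_lt_one (norm_pos_iff.mpr (one_add_real_mul_ne_zero hα ht)),
    ← sq_lt_sq₀ (norm_nonneg _) (norm_nonneg _)]
  have hα2 : α ^ 2 < 1 := by nlinarith [sq_abs α, abs_nonneg α]
  have ht2 : t.re ^ 2 + t.im ^ 2 < 1 := by
    rw [← sq_lt_one_iff₀ (norm_nonneg t), Complex.sq_norm, normSq_apply] at ht; nlinarith
  -- `‖1 + α t‖² - ‖t + α‖² = (1 - α²)(1 - ‖t‖²)`
  simp only [Complex.sq_norm, normSq_apply, add_re, add_im, one_re, one_im, ofReal_re, ofReal_im,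
    mul_re, mul_im]
  nlinarith [mul_pos (sub_pos.mpr hα2) (sub_pos.mpr ht2)]

theorem mobius_neg_mobius (hα : α ^ 2 ≠ 1) (ht : 1 + α * t ≠ 0) : mobius (-α) (mobius α t) = t := by
  have hα' : (1 : ℂ) - α ^ 2 ≠ 0 := by exact_mod_cast sub_ne_zero.mpr hα.symm
  unfold mobius
  push_cast
  rw [div_add' _ _ _ ht, mul_div_assoc', add_div' _ _ _ ht, div_div_div_cancel_right₀ ht]
  rw [div_eq_iff fun h => hα' (by linear_combination h)]
  ring

theorem invOn_mobius (hα : |α| < 1) :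
    InvOn (mobius (-α)) (mobius α) {t | ‖t‖ < 1} {t | ‖t‖ < 1} := by
  have hα2 : α ^ 2 ≠ 1 := by nlinarith [sq_abs α, abs_nonneg α]
  refine ⟨fun t ht => mobius_neg_mobius hα2 (one_add_real_mul_ne_zero hα ht), fun w hw => ?_⟩
  simpa using mobius_neg_mobius (α := -α) (by simpa using hα2)
    (one_add_real_mul_ne_zero (by rwa [abs_neg]) hw)

theorem mobius_ofReal (α s : ℝ) : mobius α s = ((s + α) / (1 + α * s) : ℝ) := by
  simp [mobius]

theorem im_mobius_eq_zero_iff (hα : |α| < 1) (ht : ‖t‖ < 1) : (mobius α t).im = 0 ↔ t.im = 0 := by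
  constructor
  · intro h
    rw [← (invOn_mobius hα).1 ht, ← re_add_im (mobius α t), h, ofReal_zero, zero_mul, add_zero,
      mobius_ofReal, ofReal_im]
  · intro h
    rw [← re_add_im t, h, ofReal_zero, zero_mul, add_zero, mobius_ofReal, ofReal_im]

theorem real_mobius_mem_Ico_iff {s : ℝ} (hα : |α| < 1) (hs : |s| < 1) :
    (s + α) / (1 + α * s) ∈ Ico α 1 ↔ s ∈ Ico 0 1 := by
  obtain ⟨hα₁, hα₂⟩ := abs_lt.mp hα
  obtain ⟨hs₁, hs₂⟩ := abs_lt.mp hs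
  have hden : 0 < 1 + α * s := by nlinarith
  have hα2 : 0 < 1 - α ^ 2 := by nlinarith
  rw [mem_Ico, mem_Ico, le_div_iff₀ hden, div_lt_one hden]
  constructor
  · rintro ⟨h, -⟩
    exact ⟨by nlinarith, hs₂⟩
  · rintro ⟨h, -⟩
    exact ⟨by nlinarith [mul_nonneg h hα2.le],
      by nlinarith [mul_pos (sub_pos.2 hs₂) (sub_pos.2 hα₂)]⟩

theorem mobius_mem_realSegment_iff (hα : |α| < 1) (ht : ‖t‖ < 1) :
    mobius α t ∈ realSegment α ↔ t ∈ realSegment 0 := by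
  by_cases him : t.im = 0
  · have hre : |t.re| < 1 := by rwa [← re_add_im t, him, ofReal_zero, zero_mul, add_zero, norm_real,
      Real.norm_eq_abs] at ht
    rw [← re_add_im t, him, ofReal_zero, zero_mul, add_zero, mobius_ofReal]
    simp only [realSegment, mem_ofPred_eq, ofReal_re, ofReal_im, true_and]
    exact real_mobius_mem_Ico_iff hα hre
  · have him' : (mobius α t).im ≠ 0 := by rwa [Ne, im_mobius_eq_zero_iff hα ht]
    simp [realSegment, him, him']

theorem mapsTo_mobius_slitDisc (hα : |α| < 1) : MapsTo (mobius α) (slitDisc 0) (slitDisc α) :=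
  fun _ ⟨ht, hseg⟩ => ⟨norm_mobius_lt_one hα ht, (mobius_mem_realSegment_iff hα ht).not.mpr hseg⟩

theorem mapsTo_mobius_neg_slitDisc (hα : |α| < 1) :
    MapsTo (mobius (-α)) (slitDisc α) (slitDisc 0) := by
  rintro w ⟨hw, hseg⟩
  have hα' : |-α| < 1 := by rwa [abs_neg]
  refine ⟨norm_mobius_lt_one hα' hw, fun h => hseg ?_⟩
  rwa [← (invOn_mobius hα).2 hw, mobius_mem_realSegment_iff hα (norm_mobius_lt_one hα' hw)]

theorem differentiableOn_mobius (hα : |α| < 1) : DifferentiableOn ℂ (mobius α) {t | ‖t‖ < 1} :=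
  fun _ ht => DifferentiableAt.differentiableWithinAt (f := fun t : ℂ => (t + α) / (1 + α * t))
    (by fun_prop (disch := exact one_add_real_mul_ne_zero hα ht))

end Mobius

section UpperSqrt

variable {t z : ℂ}

theorem mem_slitDisc_zero_iff : t ∈ slitDisc 0 ↔ ‖t‖ < 1 ∧ -t ∈ slitPlane := by
  rw [mem_slitPlane_iff_not_le_zero, neg_nonpos, le_def]
  simp only [slitDisc, realSegment, mem_sdiff, mem_ofPred_eq, zero_re, zero_im]
  constructor
  · rintro ⟨ht, h⟩
    exact ⟨ht, fun ⟨h₁, h₂⟩ => h ⟨h₂.symm, h₁, (re_le_norm t).trans_lt ht⟩⟩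
  · rintro ⟨ht, h⟩
    exact ⟨ht, fun ⟨h₁, h₂, _⟩ => h ⟨h₂, h₁.symm⟩⟩

theorem neg_sq_mem_slitPlane (hz : 0 < z.im) : -(z ^ 2) ∈ slitPlane := by
  rw [mem_slitPlane_iff]
  by_cases hre : z.re = 0
  · left
    simp [sq, hre, hz]
  · right
    simp only [neg_im, sq, mul_im]
    intro h
    exact mul_ne_zero hre hz.ne' (by linarith)

theorem mapsTo_sq_upperHalfDisc : MapsTo (· ^ 2) upperHalfDisc (slitDisc 0) := fun z ⟨hz, him⟩ =>
  mem_slitDisc_zero_iff.mpr ⟨by rw [norm_pow]; nlinarith [norm_nonneg z], neg_sq_mem_slitPlane him⟩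

theorem upperSqrt_sq (ht : t ≠ 0) : upperSqrt t ^ 2 = t := by
  rw [upperSqrt, mul_pow, I_sq, ← exp_nat_mul, Nat.cast_ofNat, mul_div_cancel₀ _ two_ne_zero,
    exp_log (neg_ne_zero.mpr ht), neg_one_mul, neg_neg]

theorem im_upperSqrt_pos (ht : -t ∈ slitPlane) : 0 < (upperSqrt t).im := by
  have harg := mem_slitPlane_iff_arg.mp ht
  rw [upperSqrt, I_mul_im, exp_re]
  refine mul_pos (Real.exp_pos _) (Real.cos_pos_of_mem_Ioo ⟨?_, ?_⟩) <;>
    simp only [div_ofNat_im, log_im]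
  · linarith [neg_pi_lt_arg (-t)]
  · linarith [lt_of_le_of_ne (arg_le_pi (-t)) harg.1]

theorem mapsTo_upperSqrt : MapsTo upperSqrt (slitDisc 0) upperHalfDisc := by
  intro t ht
  obtain ⟨ht, hslit⟩ := mem_slitDisc_zero_iff.mp ht
  have ht0 : t ≠ 0 := by rintro rfl; simp at hslit
  refine ⟨?_, im_upperSqrt_pos hslit⟩
  have hsq : ‖upperSqrt t‖ ^ 2 = ‖t‖ := by rw [← norm_pow, upperSqrt_sq ht0]
  nlinarith [norm_nonneg (upperSqrt t)]

theorem injOn_sq_upperHalfPlane : InjOn (· ^ 2 : ℂ → ℂ) {z | 0 < z.im} := by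
  intro z hz w hw h
  rcases sq_eq_sq_iff_eq_or_eq_neg.mp h with h | h
  · exact h
  · have : 0 < (-w).im := h ▸ hz
    simp only [neg_im, mem_ofPred_eq] at this hw
    linarith

theorem invOn_upperSqrt_sq : InvOn upperSqrt (· ^ 2) upperHalfDisc (slitDisc 0) := by
  have hsq : RightInvOn upperSqrt (· ^ 2) (slitDisc 0) := fun t ht =>
    upperSqrt_sq (by rintro rfl; simp [mem_slitDisc_zero_iff] at ht)
  refine ⟨fun z hz => ?_, hsq⟩
  have hz2 := mapsTo_sq_upperHalfDisc hz
  exact injOn_sq_upperHalfPlane (mapsTo_upperSqrt hz2).2 hz.2 (hsq hz2)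

theorem differentiableOn_upperSqrt : DifferentiableOn ℂ upperSqrt (slitDisc 0) := fun t ht => by
  have hlog := (differentiableAt_log (mem_slitDisc_zero_iff.mp ht).2).comp t differentiableAt_id.neg
  exact ((hlog.div_const 2).cexp.const_mul I).differentiableWithinAt

end UpperSqrt

/-- For `α ∈ (−1, 1)`, the map `u_α(z) = (z² + α)/(1 + α z²)`
maps the open upper half of the unit disc biholomorphically onto the slit
disc: the open unit disc minus the real segment `[α, 1)`.  That is, `u_α` is
holomorphic and injective on the open upper half-disc, its image is exactly
the slit disc, and it admits a holomorphic inverse there. -/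
theorem u_alpha_biholomorphic_onto_slit_disc (α : ℝ) (hα : α ∈ Set.Ioo (-1 : ℝ) 1) :
    let u : ℂ → ℂ := fun z => (z ^ 2 + (α : ℂ)) / (1 + (α : ℂ) * z ^ 2)
    let Ω : Set ℂ := {z : ℂ | ‖z‖ < 1 ∧ 0 < z.im}
    let S : Set ℂ :=
      {w : ℂ | ‖w‖ < 1} \ {w : ℂ | w.im = 0 ∧ α ≤ w.re ∧ w.re < 1}
    DifferentiableOn ℂ u Ω ∧
    Set.InjOn u Ω ∧
    u '' Ω = S ∧
    ∃ v : ℂ → ℂ, DifferentiableOn ℂ v S ∧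
      (∀ z ∈ Ω, v (u z) = z) ∧ (∀ w ∈ S, u (v w) = w) := by
  intro u Ω S
  have hα' : |α| < 1 := abs_lt.mpr hα
  have hΩ : Ω = upperHalfDisc := rfl
  have hS : S = slitDisc α := rfl
  have hu : u = mobius α ∘ (· ^ 2) := rfl
  rw [hΩ, hS, hu]
  have hinv : InvOn (upperSqrt ∘ mobius (-α)) (mobius α ∘ (· ^ 2)) upperHalfDisc (slitDisc α) :=
    invOn_upperSqrt_sq.comp ((invOn_mobius hα').mono sdiff_subset sdiff_subset)
      mapsTo_sq_upperHalfDisc (mapsTo_mobius_neg_slitDisc hα')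
  have hbij := hinv.bijOn ((mapsTo_mobius_slitDisc hα').comp mapsTo_sq_upperHalfDisc)
    (mapsTo_upperSqrt.comp (mapsTo_mobius_neg_slitDisc hα'))
  refine ⟨?_, hbij.injOn, hbij.image_eq, upperSqrt ∘ mobius (-α), ?_, fun z hz => hinv.1 hz,
    fun w hw => hinv.2 hw⟩
  · exact (differentiableOn_mobius hα').comp (differentiable_pow 2).differentiableOn
      (mapsTo_sq_upperHalfDisc.mono_right sdiff_subset)
  · exact differentiableOn_upperSqrt.comp
      ((differentiableOn_mobius (by rwa [abs_neg])).mono sdiff_subset)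
      (mapsTo_mobius_neg_slitDisc hα')
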